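/- Assume (A1)–(A2), fix t₀ ∈ [0,T] and x₀ ∈ ℝⁿ, and let (x*, u*) be an admissible pair for (t₀,x₀) that is optimal for the problem with terminal cost Ψ(x) = min_{i∈{1,…,m}} Ψ_i(x), where Ψ_i(x) = ½xᵀA_ix + b_iᵀx + c_i. Let k̃ ∈ argmin_{i∈{1,…,m}} Ψ_i(x*(T)). Then: (i) (x*, u*) is also an optimal pair for the problem with terminal cost Ψ_{k̃}, i.e., its cost with terminal cost Ψ_{k̃} equals Ṽ_{k̃}(t₀,x₀), the infimum over admissible pairs of the cost with terminal cost Ψ_{k̃}; and (ii) k̃ ∈ argmin_{i∈{1,…,m}} Ṽ_i(t₀,x₀). -/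

import Mathlib

open Matrix Set MeasureTheory

noncomputable section

/-- The total cost of a state/control pair `(x, u)` on `[t₀, T]`:
running cost `½ xᵀ M_xx x + ½ uᵀ R u + xᵀ S u` plus terminal cost `G (x T)`. -/
def LQRCost {n l : ℕ} (Mxx : ℝ → Matrix (Fin n) (Fin n) ℝ)
    (R : ℝ → Matrix (Fin l) (Fin l) ℝ) (S : ℝ → Matrix (Fin n) (Fin l) ℝ)
    (t₀ T : ℝ) (x : ℝ → Fin n → ℝ) (u : ℝ → Fin l → ℝ)
    (G : (Fin n → ℝ) → ℝ) : ℝ :=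
  (∫ s in t₀..T,
      (((1 : ℝ) / 2) * (x s ⬝ᵥ (Mxx s *ᵥ x s)) + ((1 : ℝ) / 2) * (u s ⬝ᵥ (R s *ᵥ u s))
        + x s ⬝ᵥ (S s *ᵥ u s))) + G (x T)

/-- A pair `(x, u) ∈ L²(t₀,T;ℝⁿ) × L²(t₀,T;ℝˡ)` is admissible for initial data `(t₀, x₀)`
if `x` is (absolutely) continuous, solves `ẋ(s) = A(s) x(s) + B(s) u(s)` a.e. on `(t₀,T)`
(equivalently, in integral form) and `x t₀ = x₀`. -/
def Admissible {n l : ℕ} (A : ℝ → Matrix (Fin n) (Fin n) ℝ)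
    (B : ℝ → Matrix (Fin n) (Fin l) ℝ) (t₀ T : ℝ) (x₀ : Fin n → ℝ)
    (x : ℝ → Fin n → ℝ) (u : ℝ → Fin l → ℝ) : Prop :=
  ContinuousOn x (Icc t₀ T) ∧ x t₀ = x₀ ∧
  (∀ s ∈ Icc t₀ T, x s = x₀ + ∫ τ in t₀..s, (A τ *ᵥ x τ + B τ *ᵥ u τ)) ∧
  MemLp x 2 (volume.restrict (Ioc t₀ T)) ∧
  MemLp u 2 (volume.restrict (Ioc t₀ T))

/-- The value function: infimum of the cost over all admissible pairs for `(t₀, x₀)`. -/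
def LQRValue {n l : ℕ} (A : ℝ → Matrix (Fin n) (Fin n) ℝ)
    (B : ℝ → Matrix (Fin n) (Fin l) ℝ)
    (Mxx : ℝ → Matrix (Fin n) (Fin n) ℝ) (R : ℝ → Matrix (Fin l) (Fin l) ℝ)
    (S : ℝ → Matrix (Fin n) (Fin l) ℝ) (t₀ T : ℝ) (x₀ : Fin n → ℝ)
    (G : (Fin n → ℝ) → ℝ) : ℝ :=
  sInf { c : ℝ | ∃ x u, Admissible A B t₀ T x₀ x u ∧ c = LQRCost Mxx R S t₀ T x u G }

/-- `D(t) = B(t) R(t)⁻¹ B(t)ᵀ`. -/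
def Dmat {n l : ℕ} (B : ℝ → Matrix (Fin n) (Fin l) ℝ)
    (R : ℝ → Matrix (Fin l) (Fin l) ℝ) (t : ℝ) : Matrix (Fin n) (Fin n) ℝ :=
  B t * (R t)⁻¹ * (B t)ᵀ

/-- `C(t) = M_xx(t) − S(t) R(t)⁻¹ S(t)ᵀ`. -/
def Cmat {n l : ℕ} (Mxx : ℝ → Matrix (Fin n) (Fin n) ℝ)
    (S : ℝ → Matrix (Fin n) (Fin l) ℝ) (R : ℝ → Matrix (Fin l) (Fin l) ℝ)
    (t : ℝ) : Matrix (Fin n) (Fin n) ℝ :=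
  Mxx t - S t * (R t)⁻¹ * (S t)ᵀ

/-- `M(t) = A(t) − B(t) R(t)⁻¹ S(t)ᵀ`. -/
def Mmat {n l : ℕ} (A : ℝ → Matrix (Fin n) (Fin n) ℝ)
    (B S : ℝ → Matrix (Fin n) (Fin l) ℝ) (R : ℝ → Matrix (Fin l) (Fin l) ℝ)
    (t : ℝ) : Matrix (Fin n) (Fin n) ℝ :=
  A t - B t * (R t)⁻¹ * (S t)ᵀ

/-- Assumptions (A1)–(A2): `A, B, S, M_xx, R` are continuous on `[0,T]`, `M_xx(t)` and
`R(t)` are symmetric positive definite, and `C(t) = M_xx(t) − S(t)R(t)⁻¹S(t)ᵀ` is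
symmetric positive definite, for every `t ∈ [0,T]`. -/
def A1A2 {n l : ℕ} (T : ℝ) (A : ℝ → Matrix (Fin n) (Fin n) ℝ)
    (B S : ℝ → Matrix (Fin n) (Fin l) ℝ)
    (Mxx : ℝ → Matrix (Fin n) (Fin n) ℝ) (R : ℝ → Matrix (Fin l) (Fin l) ℝ) : Prop :=
  ContinuousOn A (Icc 0 T) ∧ ContinuousOn B (Icc 0 T) ∧ ContinuousOn S (Icc 0 T) ∧
  ContinuousOn Mxx (Icc 0 T) ∧ ContinuousOn R (Icc 0 T) ∧
  (∀ t ∈ Icc 0 T, (Mxx t).PosDef) ∧ (∀ t ∈ Icc 0 T, (R t).PosDef) ∧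
  (∀ t ∈ Icc 0 T, (Cmat Mxx S R t).PosDef)

/-- `P : [0,T] → Sym(n)` solves the Riccati final value problem
`Ṗ = Pᵀ D P − Pᵀ M − Mᵀ P − C` on `(0,T)`, `P(T) = PT`. -/
def RiccatiSol {n : ℕ} (T : ℝ) (D C M : ℝ → Matrix (Fin n) (Fin n) ℝ)
    (PT : Matrix (Fin n) (Fin n) ℝ) (P : ℝ → Matrix (Fin n) (Fin n) ℝ) : Prop :=
  ContinuousOn P (Icc 0 T) ∧ (∀ t ∈ Icc 0 T, (P t).IsSymm) ∧
  (∀ t ∈ Ioo 0 T, ∀ i j, HasDerivAt (fun s => P s i j)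
      (((P t)ᵀ * D t * P t - (P t)ᵀ * M t - (M t)ᵀ * P t - C t) i j) t) ∧
  P T = PT

/-- `q : [0,T] → ℝⁿ` solves the linear final value problem
`q̇ = Pᵀ D q − Mᵀ q` on `(0,T)`, `q(T) = qT`. -/
def LinearSol {n : ℕ} (T : ℝ) (D M : ℝ → Matrix (Fin n) (Fin n) ℝ)
    (P : ℝ → Matrix (Fin n) (Fin n) ℝ) (qT : Fin n → ℝ) (q : ℝ → Fin n → ℝ) : Prop :=
  ContinuousOn q (Icc 0 T) ∧
  (∀ t ∈ Ioo 0 T, ∀ i, HasDerivAt (fun s => q s i)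
      (((P t)ᵀ *ᵥ (D t *ᵥ q t) - (M t)ᵀ *ᵥ q t) i) t) ∧
  q T = qT

/-- `r : [0,T] → ℝ` solves the scalar final value problem
`ṙ = ½ qᵀ D q` on `(0,T)`, `r(T) = rT`. -/
def ScalarSol {n : ℕ} (T : ℝ) (D : ℝ → Matrix (Fin n) (Fin n) ℝ)
    (q : ℝ → Fin n → ℝ) (rT : ℝ) (r : ℝ → ℝ) : Prop :=
  ContinuousOn r (Icc 0 T) ∧
  (∀ t ∈ Ioo 0 T, HasDerivAt r (((1 : ℝ) / 2) * (q t ⬝ᵥ (D t *ᵥ q t))) t) ∧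
  r T = rT

/-- The quadratic function `V_i(t,x) = ½ xᵀ P_i(t) x + q_i(t)ᵀ x + r_i(t)`. -/
def Vquad {n : ℕ} (P : ℝ → Matrix (Fin n) (Fin n) ℝ) (q : ℝ → Fin n → ℝ)
    (r : ℝ → ℝ) (t : ℝ) (x : Fin n → ℝ) : ℝ :=
  ((1 : ℝ) / 2) * (x ⬝ᵥ (P t *ᵥ x)) + q t ⬝ᵥ x + r t

/-- The quadratic terminal cost `Ψ_i(x) = ½ xᵀ A_i x + b_iᵀ x + c_i`. -/
def Psiq {n : ℕ} (Aq : Matrix (Fin n) (Fin n) ℝ) (b : Fin n → ℝ) (c : ℝ)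
    (x : Fin n → ℝ) : ℝ :=
  ((1 : ℝ) / 2) * (x ⬝ᵥ (Aq *ᵥ x)) + b ⬝ᵥ x + c

/-! The `Ψ`-cost lies below every `Ψ_i`-cost and agrees with the `Ψ_k̃`-cost at `(x*, u*)`, so
`(x*, u*)` minimises the `Ψ_k̃`-cost and its cost bounds every `Ṽ_i` from below. This needs the
infima to be finite (`sInf` of a set unbounded below is `0`): by the Schur complement condition
the running cost is a positive definite quadratic form in `(x, u)`, which absorbs the linear part
`bᵀ x(T) = bᵀ x₀ + ∫ bᵀ (A x + B u)` of a quadratic terminal cost. -/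

open scoped ComplexOrder in
theorem Matrix.posDef_fromBlocks_of_posDef_schur {m n 𝕜 : Type*} [Fintype m] [Fintype n]
    [DecidableEq m] [DecidableEq n] [RCLike 𝕜] {A : Matrix m m 𝕜} {B : Matrix m n 𝕜}
    {D : Matrix n n 𝕜} (hD : D.PosDef) (hS : (A - B * D⁻¹ * Bᴴ).PosDef) :
    (fromBlocks A B Bᴴ D).PosDef := by
  have := hD.isUnit.invertible
  rw [PosSemidef.posDef_iff_det_ne_zero ((PosDef.fromBlocks₂₂ A B hD).mpr hS.posSemidef),
    det_fromBlocks₂₂, invOf_eq_nonsing_inv]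
  exact mul_ne_zero hD.det_pos.ne' hS.det_pos.ne'

theorem Matrix.PosDef.neg_half_dotProduct_inv_le {ι : Type*} [Fintype ι] [DecidableEq ι]
    {H : Matrix ι ι ℝ} (hH : H.PosDef) (g z : ι → ℝ) :
    -(1 / 2 * g ⬝ᵥ (H⁻¹ *ᵥ g)) ≤ 1 / 2 * z ⬝ᵥ (H *ᵥ z) + g ⬝ᵥ z := by
  have hHg : H *ᵥ (H⁻¹ *ᵥ g) = g := by
    rw [mulVec_mulVec, mul_nonsing_inv _ ((isUnit_iff_isUnit_det _).mp hH.isUnit), one_mulVec]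
  have hHt : Hᵀ = H := by simpa using hH.isHermitian.eq
  have hcross : (H⁻¹ *ᵥ g) ⬝ᵥ (H *ᵥ z) = g ⬝ᵥ z := by
    rw [dotProduct_mulVec, ← mulVec_transpose, hHt, hHg]
  -- expand `0 ≤ wᵀ H w` at the minimiser shift `w = z + H⁻¹ g`
  have := hH.posSemidef.dotProduct_mulVec_nonneg (z + H⁻¹ *ᵥ g)
  simp only [star_trivial, mulVec_add, dotProduct_add, add_dotProduct, hHg, hcross] at this
  rw [dotProduct_comm z g, dotProduct_comm _ g] at this
  linarith

theorem ContinuousOn.matrix_inv {X ι : Type*} [TopologicalSpace X] [Fintype ι] [DecidableEq ι]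
    {H : X → Matrix ι ι ℝ} {K : Set X} (hH : ContinuousOn H K) (hdet : ∀ s ∈ K, (H s).det ≠ 0) :
    ContinuousOn (fun s => (H s)⁻¹) K := fun s hs =>
  ContinuousAt.comp_continuousWithinAt
    (continuousAt_matrix_inv _ (NormedRing.inverse_continuousAt (.mk0 _ (hdet s hs)))) (hH s hs)

namespace MeasureTheory

variable {X ι κ : Type*} [TopologicalSpace X] [MeasurableSpace X] [OpensMeasurableSpace X]
  {μ : Measure X} {K A : Set X} [Fintype ι] [Fintype κ] {M : X → Matrix ι κ ℝ}

theorem IntegrableOn.mulVec_of_continuousOn {g : X → κ → ℝ}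
    (hg : ∀ j, IntegrableOn (fun s => g s j) A μ) (hM : ContinuousOn M K) (hK : IsCompact K)
    (hA : MeasurableSet A) (hAK : A ⊆ K) :
    IntegrableOn (fun s => M s *ᵥ g s) A μ :=
  Integrable.of_eval fun _ => integrable_finsetSum _ fun j _ =>
    (hg j).continuousOn_mul_of_subset (by fun_prop) hK hA hAK

theorem IntegrableOn.dotProduct_mulVec_of_continuousOn {f : X → ι → ℝ} {g : X → κ → ℝ}
    (hfg : ∀ i j, IntegrableOn (fun s => f s i * g s j) A μ) (hM : ContinuousOn M K)
    (hK : IsCompact K) (hA : MeasurableSet A) (hAK : A ⊆ K) :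
    IntegrableOn (fun s => f s ⬝ᵥ (M s *ᵥ g s)) A μ := by
  have : (fun s => f s ⬝ᵥ (M s *ᵥ g s)) = fun s => ∑ i, ∑ j, M s i j * (f s i * g s j) := by
    ext s
    simp only [dotProduct, mulVec, Finset.mul_sum]
    exact Finset.sum_congr rfl fun i _ => Finset.sum_congr rfl fun j _ => by ring
  rw [this]
  exact integrable_finsetSum _ fun i _ => integrable_finsetSum _ fun j _ =>
    (hfg i j).continuousOn_mul_of_subset (by fun_prop) hK hA hAK

end MeasureTheory

def runningCost {n l : ℕ} (Q : Matrix (Fin n) (Fin n) ℝ) (R : Matrix (Fin l) (Fin l) ℝ)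
    (S : Matrix (Fin n) (Fin l) ℝ) (x : Fin n → ℝ) (u : Fin l → ℝ) : ℝ :=
  ((1 : ℝ) / 2) * (x ⬝ᵥ (Q *ᵥ x)) + ((1 : ℝ) / 2) * (u ⬝ᵥ (R *ᵥ u)) + x ⬝ᵥ (S *ᵥ u)

theorem runningCost_eq_fromBlocks {n l : ℕ} (Q : Matrix (Fin n) (Fin n) ℝ)
    (R : Matrix (Fin l) (Fin l) ℝ) (S : Matrix (Fin n) (Fin l) ℝ) (x : Fin n → ℝ)
    (u : Fin l → ℝ) :
    runningCost Q R S x u = 1 / 2 * (x ⊕ᵥ u) ⬝ᵥ (fromBlocks Q S Sᵀ R *ᵥ (x ⊕ᵥ u)) := by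
  simp only [runningCost, fromBlocks_mulVec, Sum.elim_comp_inl, Sum.elim_comp_inr,
    sumElim_dotProduct_sumElim, dotProduct_add, mulVec_transpose]
  rw [dotProduct_comm u (x ᵥ* S), ← dotProduct_mulVec]
  ring

theorem dotProduct_mulVec_add_mulVec {n l : ℕ} (A : Matrix (Fin n) (Fin n) ℝ)
    (B : Matrix (Fin n) (Fin l) ℝ) (b x : Fin n → ℝ) (u : Fin l → ℝ) :
    b ⬝ᵥ (A *ᵥ x + B *ᵥ u) = (Aᵀ *ᵥ b ⊕ᵥ Bᵀ *ᵥ b) ⬝ᵥ (x ⊕ᵥ u) := by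
  rw [sumElim_dotProduct_sumElim, dotProduct_add, mulVec_transpose, mulVec_transpose,
    ← dotProduct_mulVec, ← dotProduct_mulVec]

theorem exists_neg_le_runningCost_add_dotProduct {X : Type*} [TopologicalSpace X] {K : Set X}
    (hK : IsCompact K) {n l : ℕ} {A Q : X → Matrix (Fin n) (Fin n) ℝ}
    {B S : X → Matrix (Fin n) (Fin l) ℝ} {R : X → Matrix (Fin l) (Fin l) ℝ}
    (hA : ContinuousOn A K) (hB : ContinuousOn B K) (hS : ContinuousOn S K)
    (hQ : ContinuousOn Q K) (hRc : ContinuousOn R K) (hR : ∀ s ∈ K, (R s).PosDef)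
    (hC : ∀ s ∈ K, (Q s - S s * (R s)⁻¹ * (S s)ᵀ).PosDef) (b : Fin n → ℝ) :
    ∃ κ, ∀ s ∈ K, ∀ x u, -κ ≤ runningCost (Q s) (R s) (S s) x u + b ⬝ᵥ (A s *ᵥ x + B s *ᵥ u) := by
  set H : X → Matrix (Fin n ⊕ Fin l) (Fin n ⊕ Fin l) ℝ :=
    fun s => fromBlocks (Q s) (S s) (S s)ᵀ (R s)
  set g : X → Fin n ⊕ Fin l → ℝ := fun s => (A s)ᵀ *ᵥ b ⊕ᵥ (B s)ᵀ *ᵥ b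
  have hH : ∀ s ∈ K, (H s).PosDef := fun s hs =>
    posDef_fromBlocks_of_posDef_schur (hR s hs) (by simpa using hC s hs)
  have hHinv : ContinuousOn (fun s => (H s)⁻¹) K :=
    ContinuousOn.matrix_inv (by fun_prop) fun s hs => (hH s hs).det_pos.ne'
  have hg : ContinuousOn g K :=
    continuousOn_pi.2 <| Sum.rec (fun _ => by simp only [g, Sum.elim_inl]; fun_prop)
      (fun _ => by simp only [g, Sum.elim_inr]; fun_prop)
  obtain ⟨κ, hκ⟩ := hK.bddAbove_image (f := fun s => 1 / 2 * g s ⬝ᵥ ((H s)⁻¹ *ᵥ g s)) (by fun_prop)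
  refine ⟨κ, fun s hs x u => ?_⟩
  rw [runningCost_eq_fromBlocks, dotProduct_mulVec_add_mulVec]
  exact (neg_le_neg (hκ ⟨s, hs, rfl⟩)).trans ((hH s hs).neg_half_dotProduct_inv_le _ _)

section Admissible

variable {n l : ℕ} {A Q : ℝ → Matrix (Fin n) (Fin n) ℝ} {B S : ℝ → Matrix (Fin n) (Fin l) ℝ}
  {R : ℝ → Matrix (Fin l) (Fin l) ℝ} {t₀ T : ℝ} {x₀ : Fin n → ℝ} {x : ℝ → Fin n → ℝ}
  {u : ℝ → Fin l → ℝ}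

theorem Admissible.integrableOn_state_mul (h : Admissible A B t₀ T x₀ x u) {φ : ℝ → ℝ}
    (hφ : IntegrableOn φ (Ioc t₀ T)) (i : Fin n) :
    IntegrableOn (fun s => x s i * φ s) (Ioc t₀ T) :=
  hφ.continuousOn_mul_of_subset (continuousOn_pi.1 h.1 i) isCompact_Icc measurableSet_Ioc
    Ioc_subset_Icc_self

theorem Admissible.integrableOn_state_apply (h : Admissible A B t₀ T x₀ x u) (i : Fin n) :
    IntegrableOn (fun s => x s i) (Ioc t₀ T) :=
  (continuousOn_pi.1 h.1 i).integrableOn_Icc.mono_set Ioc_subset_Icc_self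

theorem Admissible.integrableOn_control_apply (h : Admissible A B t₀ T x₀ x u) (j : Fin l) :
    IntegrableOn (fun s => u s j) (Ioc t₀ T) :=
  (h.2.2.2.2.eval j).integrable one_le_two

theorem Admissible.intervalIntegrable_runningCost (h : Admissible A B t₀ T x₀ x u)
    (hle : t₀ ≤ T) (hQ : ContinuousOn Q (Icc t₀ T)) (hR : ContinuousOn R (Icc t₀ T))
    (hS : ContinuousOn S (Icc t₀ T)) :
    IntervalIntegrable (fun s => runningCost (Q s) (R s) (S s) (x s) (u s)) volume t₀ T := by
  have hu := h.2.2.2.2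
  have hxx := IntegrableOn.dotProduct_mulVec_of_continuousOn
    (fun i j => h.integrableOn_state_mul (h.integrableOn_state_apply j) i) hQ isCompact_Icc
    measurableSet_Ioc Ioc_subset_Icc_self
  have huu := IntegrableOn.dotProduct_mulVec_of_continuousOn
    (fun i j => (hu.eval i).integrable_mul (hu.eval j)) hR isCompact_Icc measurableSet_Ioc
    Ioc_subset_Icc_self
  have hxu := IntegrableOn.dotProduct_mulVec_of_continuousOn
    (fun i j => h.integrableOn_state_mul (h.integrableOn_control_apply j) i) hS isCompact_Icc
    measurableSet_Ioc Ioc_subset_Icc_self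
  exact (intervalIntegrable_iff_integrableOn_Ioc_of_le hle).2
    (((hxx.const_mul _).add (huu.const_mul _)).add hxu)

theorem Admissible.intervalIntegrable_dynamics (h : Admissible A B t₀ T x₀ x u) (hle : t₀ ≤ T)
    (hA : ContinuousOn A (Icc t₀ T)) (hB : ContinuousOn B (Icc t₀ T)) :
    IntervalIntegrable (fun s => A s *ᵥ x s + B s *ᵥ u s) volume t₀ T :=
  (intervalIntegrable_iff_integrableOn_Ioc_of_le hle).2 <|
    (IntegrableOn.mulVec_of_continuousOn h.integrableOn_state_apply hA isCompact_Icc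
      measurableSet_Ioc Ioc_subset_Icc_self).add
    (IntegrableOn.mulVec_of_continuousOn h.integrableOn_control_apply hB isCompact_Icc
      measurableSet_Ioc Ioc_subset_Icc_self)

theorem Admissible.dotProduct_apply_eq (h : Admissible A B t₀ T x₀ x u) (hle : t₀ ≤ T)
    (hA : ContinuousOn A (Icc t₀ T)) (hB : ContinuousOn B (Icc t₀ T)) (b : Fin n → ℝ) :
    b ⬝ᵥ x T = b ⬝ᵥ x₀ + ∫ s in t₀..T, b ⬝ᵥ (A s *ᵥ x s + B s *ᵥ u s) := by
  rw [h.2.2.1 T ⟨hle, le_rfl⟩, dotProduct_add]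
  exact congrArg (b ⬝ᵥ x₀ + ·)
    ((LinearMap.toContinuousLinearMap (dotProductBilin ℝ ℝ b)).intervalIntegral_comp_comm
      (h.intervalIntegrable_dynamics hle hA hB)).symm

end Admissible

theorem le_Psiq_of_posSemidef {n : ℕ} {Aq : Matrix (Fin n) (Fin n) ℝ} (hAq : Aq.PosSemidef)
    (b : Fin n → ℝ) (c : ℝ) (y : Fin n → ℝ) : b ⬝ᵥ y + c ≤ Psiq Aq b c y := by
  have := hAq.dotProduct_mulVec_nonneg y
  rw [star_trivial] at this
  unfold Psiq
  linarith

section LQR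

variable {n l : ℕ} {A Mxx : ℝ → Matrix (Fin n) (Fin n) ℝ} {B S : ℝ → Matrix (Fin n) (Fin l) ℝ}
  {R : ℝ → Matrix (Fin l) (Fin l) ℝ} {t₀ T : ℝ} {x₀ : Fin n → ℝ} {x : ℝ → Fin n → ℝ}
  {u : ℝ → Fin l → ℝ} {G G' : (Fin n → ℝ) → ℝ}

theorem LQRCost_eq_integral_runningCost_add :
    LQRCost Mxx R S t₀ T x u G
      = (∫ s in t₀..T, runningCost (Mxx s) (R s) (S s) (x s) (u s)) + G (x T) :=
  rfl

theorem LQRCost_congr (h : G (x T) = G' (x T)) :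
    LQRCost Mxx R S t₀ T x u G = LQRCost Mxx R S t₀ T x u G' := by
  simp only [LQRCost, h]

theorem LQRCost_le_LQRCost (h : G (x T) ≤ G' (x T)) :
    LQRCost Mxx R S t₀ T x u G ≤ LQRCost Mxx R S t₀ T x u G' :=
  add_le_add le_rfl h

theorem exists_le_LQRCost_of_affine_le (hA1A2 : A1A2 T A B S Mxx R) (ht₀ : t₀ ∈ Icc 0 T)
    (x₀ : Fin n → ℝ) {b : Fin n → ℝ} {c : ℝ} (hG : ∀ y, b ⬝ᵥ y + c ≤ G y) :
    ∃ K, ∀ x u, Admissible A B t₀ T x₀ x u → K ≤ LQRCost Mxx R S t₀ T x u G := by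
  obtain ⟨hA, hB, hS, hQ, hR, -, hRpd, hCpd⟩ := hA1A2
  obtain ⟨κ, hκ⟩ :=
    exists_neg_le_runningCost_add_dotProduct isCompact_Icc hA hB hS hQ hR hRpd hCpd b
  have hsub : Icc t₀ T ⊆ Icc 0 T := Icc_subset_Icc_left ht₀.1
  refine ⟨-κ * (T - t₀) + b ⬝ᵥ x₀ + c, fun x u h => ?_⟩
  have hL := h.intervalIntegrable_runningCost ht₀.2 (hQ.mono hsub) (hR.mono hsub) (hS.mono hsub)
  have hF := h.intervalIntegrable_dynamics ht₀.2 (hA.mono hsub) (hB.mono hsub)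
  have hbF : IntervalIntegrable (fun s => b ⬝ᵥ (A s *ᵥ x s + B s *ᵥ u s)) volume t₀ T :=
    let L := LinearMap.toContinuousLinearMap (dotProductBilin ℝ ℝ b)
    ⟨L.integrable_comp hF.1, L.integrable_comp hF.2⟩
  calc -κ * (T - t₀) + b ⬝ᵥ x₀ + c
      = (∫ _ in t₀..T, -κ) + b ⬝ᵥ x₀ + c := by
        rw [intervalIntegral.integral_const, smul_eq_mul, mul_comm]
    _ ≤ (∫ s in t₀..T, runningCost (Mxx s) (R s) (S s) (x s) (u s)
          + b ⬝ᵥ (A s *ᵥ x s + B s *ᵥ u s)) + b ⬝ᵥ x₀ + c := by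
        gcongr
        exact intervalIntegral.integral_mono_on ht₀.2 intervalIntegrable_const (hL.add hbF)
          fun s hs => hκ s (hsub hs) _ _
    _ = (∫ s in t₀..T, runningCost (Mxx s) (R s) (S s) (x s) (u s)) + (b ⬝ᵥ x T + c) := by
        rw [intervalIntegral.integral_add hL hbF,
          h.dotProduct_apply_eq ht₀.2 (hA.mono hsub) (hB.mono hsub)]
        ring
    _ ≤ LQRCost Mxx R S t₀ T x u G := by
        rw [LQRCost_eq_integral_runningCost_add]
        exact add_le_add le_rfl (hG _)

theorem LQRValue_le_LQRCost
    (hbdd : ∃ K, ∀ x u, Admissible A B t₀ T x₀ x u → K ≤ LQRCost Mxx R S t₀ T x u G)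
    (h : Admissible A B t₀ T x₀ x u) :
    LQRValue A B Mxx R S t₀ T x₀ G ≤ LQRCost Mxx R S t₀ T x u G := by
  obtain ⟨K, hK⟩ := hbdd
  exact csInf_le ⟨K, by rintro _ ⟨x', u', h', rfl⟩; exact hK x' u' h'⟩ ⟨x, u, h, rfl⟩

theorem le_LQRValue {K : ℝ} (h : Admissible A B t₀ T x₀ x u)
    (hK : ∀ x' u', Admissible A B t₀ T x₀ x' u' → K ≤ LQRCost Mxx R S t₀ T x' u' G) :
    K ≤ LQRValue A B Mxx R S t₀ T x₀ G :=
  le_csInf ⟨_, x, u, h, rfl⟩ (by rintro _ ⟨x', u', h', rfl⟩; exact hK x' u' h')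

theorem LQRValue_eq_LQRCost (h : Admissible A B t₀ T x₀ x u)
    (hmin : ∀ x' u', Admissible A B t₀ T x₀ x' u' →
      LQRCost Mxx R S t₀ T x u G ≤ LQRCost Mxx R S t₀ T x' u' G) :
    LQRValue A B Mxx R S t₀ T x₀ G = LQRCost Mxx R S t₀ T x u G :=
  le_antisymm (LQRValue_le_LQRCost ⟨_, hmin⟩ h) (le_LQRValue h hmin)

end LQR

theorem optimal_pair_terminal_index_general {n l m : ℕ} (T : ℝ)
    (A : ℝ → Matrix (Fin n) (Fin n) ℝ) (B S : ℝ → Matrix (Fin n) (Fin l) ℝ)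
    (Mxx : ℝ → Matrix (Fin n) (Fin n) ℝ) (R : ℝ → Matrix (Fin l) (Fin l) ℝ)
    (hA1A2 : A1A2 T A B S Mxx R)
    (Aq : Fin m → Matrix (Fin n) (Fin n) ℝ) (hAq : ∀ i, (Aq i).PosSemidef)
    (b : Fin m → Fin n → ℝ) (c : Fin m → ℝ)
    (t₀ : ℝ) (ht₀ : t₀ ∈ Icc 0 T) (x₀ : Fin n → ℝ)
    (xs : ℝ → Fin n → ℝ) (us : ℝ → Fin l → ℝ)
    (hadm : Admissible A B t₀ T x₀ xs us)
    (hopt : LQRCost Mxx R S t₀ T xs us (fun y => ⨅ i, Psiq (Aq i) (b i) (c i) y)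
      = LQRValue A B Mxx R S t₀ T x₀ (fun y => ⨅ i, Psiq (Aq i) (b i) (c i) y))
    (k : Fin m)
    (hk : ∀ i, Psiq (Aq k) (b k) (c k) (xs T) ≤ Psiq (Aq i) (b i) (c i) (xs T)) :
    -- (i) `(x*, u*)` is optimal for the problem with terminal cost `Ψ_k̃`
    (LQRCost Mxx R S t₀ T xs us (Psiq (Aq k) (b k) (c k))
      = LQRValue A B Mxx R S t₀ T x₀ (Psiq (Aq k) (b k) (c k))) ∧
    -- (ii) `k̃` minimizes `i ↦ Ṽ_i(t₀,x₀)`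
    (∀ i, LQRValue A B Mxx R S t₀ T x₀ (Psiq (Aq k) (b k) (c k))
      ≤ LQRValue A B Mxx R S t₀ T x₀ (Psiq (Aq i) (b i) (c i))) := by
  have : Nonempty (Fin m) := ⟨k⟩
  have hΨ_le : ∀ y i, ⨅ j, Psiq (Aq j) (b j) (c j) y ≤ Psiq (Aq i) (b i) (c i) y :=
    fun y i => ciInf_le (finite_range _).bddBelow i
  choose K hK using fun i =>
    exists_le_LQRCost_of_affine_le hA1A2 ht₀ x₀ (le_Psiq_of_posSemidef (hAq i) (b i) (c i))
  have hΨ_bdd : ∃ K', ∀ x u, Admissible A B t₀ T x₀ x u →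
      K' ≤ LQRCost Mxx R S t₀ T x u (fun y => ⨅ i, Psiq (Aq i) (b i) (c i) y) := by
    refine ⟨⨅ i, K i, fun x u h => ?_⟩
    obtain ⟨i, hi⟩ := exists_eq_ciInf_of_finite (f := fun i => Psiq (Aq i) (b i) (c i) (x T))
    rw [LQRCost_congr hi.symm]
    exact (ciInf_le (finite_range K).bddBelow i).trans (hK i x u h)
  have hk_eq : LQRCost Mxx R S t₀ T xs us (Psiq (Aq k) (b k) (c k))
      = LQRCost Mxx R S t₀ T xs us (fun y => ⨅ i, Psiq (Aq i) (b i) (c i) y) :=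
    LQRCost_congr (le_antisymm (le_ciInf hk) (hΨ_le _ k))
  have hlow : ∀ i x u, Admissible A B t₀ T x₀ x u →
      LQRCost Mxx R S t₀ T xs us (Psiq (Aq k) (b k) (c k))
        ≤ LQRCost Mxx R S t₀ T x u (Psiq (Aq i) (b i) (c i)) := fun i x u h =>
    hk_eq ▸ (hopt ▸ LQRValue_le_LQRCost hΨ_bdd h).trans (LQRCost_le_LQRCost (hΨ_le _ i))
  have hval := LQRValue_eq_LQRCost hadm (hlow k)
  exact ⟨hval.symm, fun i => hval ▸ le_LQRValue hadm (hlow i)⟩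

/-- **Key intermediate claim in the feedback characterization of optimal controls.**
Under (A1)–(A2), let `(x*, u*)` be an admissible pair optimal for the terminal cost
`Ψ = min_i Ψ_i`, and let `k̃` minimize `i ↦ Ψ_i(x*(T))`.  Then `(x*, u*)` is also optimal
for the problem with terminal cost `Ψ_k̃` (its cost equals `Ṽ_k̃(t₀,x₀)`), and `k̃`
minimizes `i ↦ Ṽ_i(t₀,x₀)`. -/
theorem optimal_pair_terminal_index {n l m : ℕ} (hm : 0 < m) (T : ℝ) (hT : 0 < T)
    (A : ℝ → Matrix (Fin n) (Fin n) ℝ) (B S : ℝ → Matrix (Fin n) (Fin l) ℝ)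
    (Mxx : ℝ → Matrix (Fin n) (Fin n) ℝ) (R : ℝ → Matrix (Fin l) (Fin l) ℝ)
    (hA1A2 : A1A2 T A B S Mxx R)
    (Aq : Fin m → Matrix (Fin n) (Fin n) ℝ) (hAq : ∀ i, (Aq i).PosSemidef)
    (b : Fin m → Fin n → ℝ) (c : Fin m → ℝ)
    (t₀ : ℝ) (ht₀ : t₀ ∈ Icc 0 T) (x₀ : Fin n → ℝ)
    (xs : ℝ → Fin n → ℝ) (us : ℝ → Fin l → ℝ)
    (hadm : Admissible A B t₀ T x₀ xs us)
    (hopt : LQRCost Mxx R S t₀ T xs us (fun y => ⨅ i, Psiq (Aq i) (b i) (c i) y)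
      = LQRValue A B Mxx R S t₀ T x₀ (fun y => ⨅ i, Psiq (Aq i) (b i) (c i) y))
    (k : Fin m)
    (hk : ∀ i, Psiq (Aq k) (b k) (c k) (xs T) ≤ Psiq (Aq i) (b i) (c i) (xs T)) :
    -- (i) `(x*, u*)` is optimal for the problem with terminal cost `Ψ_k̃`
    (LQRCost Mxx R S t₀ T xs us (Psiq (Aq k) (b k) (c k))
      = LQRValue A B Mxx R S t₀ T x₀ (Psiq (Aq k) (b k) (c k))) ∧
    -- (ii) `k̃` minimizes `i ↦ Ṽ_i(t₀,x₀)`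
    (∀ i, LQRValue A B Mxx R S t₀ T x₀ (Psiq (Aq k) (b k) (c k))
      ≤ LQRValue A B Mxx R S t₀ T x₀ (Psiq (Aq i) (b i) (c i))) :=
  optimal_pair_terminal_index_general T A B S Mxx R hA1A2 Aq hAq b c t₀ ht₀ x₀ xs us hadm hopt k hk
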